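/- arXiv:1104.0609 — 5 statements merged into one kernel-verified Lean document; each statement's English description precedes it below -/
import Mathlib

section
/- For a prime p ≡ 3 (mod 8), the diophantine equation x² - p·y² = -2 has an integer solution. -/
/-!
Take the fundamental solution `(u, v)` of `u² - p v² = 1`. If `u = 2k + 1` is odd, then `v = 2w`
and `k (k + 1) = p w²`; since `k` and `k + 1` are coprime, one is a square and the other `p` times
a square. This gives either a solution of `s² - p t² = -1`, impossible modulo 4, or a solution of
`s² - p t² = 1` with `1 < s < u`, contradicting minimality. So `u` is even and
`(u - 1)(u + 1) = p v²` with coprime factors; the same splitting gives a solution of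
`s² - p t² = ±2`, and `+2` is impossible modulo 8.
-/

namespace Int

theorem exists_eq_sq_and_eq_mul_sq_of_dvd {d m n w : ℤ} (hd : d ≠ 0)
    (hmn : IsCoprime m n) (hdn : d ∣ n) (hm : 0 < m) (h : m * n = d * w ^ 2) :
    ∃ a b, m = a ^ 2 ∧ n = d * b ^ 2 := by
  obtain ⟨c, rfl⟩ := hdn
  have hmc : m * c = w ^ 2 := mul_left_cancel₀ hd (by linear_combination h)
  have hcop : IsCoprime m c := hmn.of_mul_right_right
  have hc : 0 ≤ c := nonneg_of_mul_nonneg_right (hmc ▸ sq_nonneg w) hm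
  obtain ⟨a, ha | ha⟩ := sq_of_isCoprime hcop hmc
  · obtain ⟨b, hb | hb⟩ := sq_of_isCoprime hcop.symm (c := w) (by linear_combination hmc)
    · exact ⟨a, b, ha, by rw [hb]⟩
    · exact ⟨a, b, ha, by rw [show c = b ^ 2 by linarith [sq_nonneg b]]⟩
  · nlinarith [sq_nonneg a]

theorem exists_eq_sq_and_eq_mul_sq {d m n w : ℤ} (hd : Prime d) (hmn : IsCoprime m n)
    (hm : 0 < m) (hn : 0 < n) (h : m * n = d * w ^ 2) :
    ∃ a b, (m = a ^ 2 ∧ n = d * b ^ 2) ∨ (m = d * b ^ 2 ∧ n = a ^ 2) := by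
  rcases hd.dvd_mul.mp ⟨w ^ 2, h⟩ with hdm | hdn
  · obtain ⟨a, b, hn, hm⟩ := exists_eq_sq_and_eq_mul_sq_of_dvd hd.ne_zero hmn.symm hdm hn
      (w := w) (by linear_combination h)
    exact ⟨a, b, .inr ⟨hm, hn⟩⟩
  · obtain ⟨a, b, hm, hn⟩ := exists_eq_sq_and_eq_mul_sq_of_dvd hd.ne_zero hmn hdn hm h
    exact ⟨a, b, .inl ⟨hm, hn⟩⟩

end Int

section Congruences

variable {d : ℤ}

theorem sq_sub_mul_sq_ne_neg_one (hd : d % 4 = 3) (a b : ℤ) : a ^ 2 - d * b ^ 2 ≠ -1 := by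
  intro h
  have hd' : (d : ZMod 4) = 3 := by
    rw [← ZMod.intCast_mod, Nat.cast_ofNat, hd]; rfl
  have key : ∀ a b : ZMod 4, a ^ 2 - 3 * b ^ 2 ≠ -1 := by decide
  exact key a b (by simpa [hd'] using congrArg (Int.cast : ℤ → ZMod 4) h)

theorem sq_sub_mul_sq_ne_two (hd : d % 8 = 3) (a b : ℤ) : a ^ 2 - d * b ^ 2 ≠ 2 := by
  intro h
  have hd' : (d : ZMod 8) = 3 := by
    rw [← ZMod.intCast_mod, Nat.cast_ofNat, hd]; rfl
  have key : ∀ a b : ZMod 8, a ^ 2 - 3 * b ^ 2 ≠ 2 := by decide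
  exact key a b (by simpa [hd'] using congrArg (Int.cast : ℤ → ZMod 8) h)

end Congruences

theorem exists_sq_sub_mul_sq_eq_neg_two_of_even {d x y : ℤ} (hd : Prime d) (hd8 : d % 8 = 3)
    (hx : Even x) (hx1 : 1 < x) (h : x ^ 2 - d * y ^ 2 = 1) :
    ∃ a b : ℤ, a ^ 2 - d * b ^ 2 = -2 := by
  obtain ⟨k, rfl⟩ := hx
  have hcop : IsCoprime (k + k - 1) (k + k + 1) := ⟨-k - 1, k, by ring⟩
  obtain ⟨a, b, ⟨hm, hn⟩ | ⟨hm, hn⟩⟩ :=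
    Int.exists_eq_sq_and_eq_mul_sq hd hcop (by omega) (by omega) (w := y) (by linear_combination h)
  · exact ⟨a, b, by linear_combination hn - hm⟩
  · exact absurd (by linear_combination hm - hn) (sq_sub_mul_sq_ne_two hd8 a b)

namespace Pell.IsFundamental

theorem even_x {d : ℤ} (hd : Prime d) (hd4 : d % 4 = 3) {u : Solution₁ d}
    (hu : IsFundamental u) : Even u.x := by
  by_contra hodd
  obtain ⟨k, hk⟩ := Int.not_even_iff_odd.mp hodd
  have hk1 : 1 ≤ k := by linarith [hu.1]
  have hy : Even u.y := by
    have hdy : Even (d * u.y ^ 2) :=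
      ⟨2 * k ^ 2 + 2 * k, by linear_combination hk * (u.x + 2 * k + 1) - u.prop⟩
    have hdodd : ¬ Even d := by rw [Int.not_even_iff_odd, Int.odd_iff]; omega
    exact (Int.even_pow.mp ((Int.even_mul.mp hdy).resolve_left hdodd)).1
  obtain ⟨w, hw⟩ := hy
  have hkw : k * (k + 1) = d * w ^ 2 := mul_left_cancel₀ (four_ne_zero (α := ℤ)) <| by
    linear_combination u.prop - (u.x + 2 * k + 1) * hk + d * (u.y + 2 * w) * hw
  have hcop : IsCoprime k (k + 1) := ⟨-1, 1, by ring⟩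
  obtain ⟨a, b, ⟨hm, hn⟩ | ⟨hm, hn⟩⟩ :=
    Int.exists_eq_sq_and_eq_mul_sq hd hcop (by omega) (by omega) hkw
  · exact sq_sub_mul_sq_ne_neg_one hd4 a b (by linear_combination hn - hm)
  · have hsol : |a| ^ 2 - d * |b| ^ 2 = 1 := by
      rw [sq_abs, sq_abs]; linear_combination hm - hn
    have hle := hu.x_le_x (a := Solution₁.mk _ _ hsol) (by
      rw [Solution₁.x_mk]; nlinarith [sq_abs a, abs_nonneg a])
    rw [Solution₁.x_mk] at hle
    nlinarith [sq_abs a, abs_nonneg a]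

end Pell.IsFundamental

theorem pell_neg_two_solvable (p : ℕ) (hp : p.Prime) (h : p % 8 = 3) :
    ∃ x y : ℤ, x ^ 2 - (p : ℤ) * y ^ 2 = -2 := by
  have hpz : Prime (p : ℤ) := Nat.prime_iff_prime_int.mp hp
  have h8 : (p : ℤ) % 8 = 3 := by omega
  obtain ⟨u, hu⟩ := Pell.IsFundamental.exists_of_not_isSquare (by exact_mod_cast hp.pos)
    hpz.not_isSquare
  exact exists_sq_sub_mul_sq_eq_neg_two_of_even hpz h8 (hu.even_x hpz (by omega)) hu.1 u.prop
end

section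
/- For a prime p ≡ 7 (mod 8), the diophantine equation x² - p·y² = 2 has an integer solution. -/
/-!
Let `(x, y)` be the fundamental solution of `x² - p y² = 1`, so that `(x - 1)(x + 1) = p y²`.
If `x` is odd, `y = 2c` and `k (k + 1) = p c²` with `x = 2k + 1`; as the factors are coprime,
one of them is a square and the other `p` times a square. Modulo 8 the equation `u² + 1 = p v²`
is impossible, so `k + 1 = u²`, `k = p v²`, and `(u, v)` is a smaller solution of the Pell
equation. Hence `x` is even, `x - 1` and `x + 1` are coprime, and the same splitting together with
the impossibility of `u² + 2 = p v²` modulo 8 gives `x + 1 = u²`, `x - 1 = p v²`, i.e.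
`u² - p v² = 2`.
-/

namespace Int

lemma exists_sq_of_isCoprime_of_pos {a b c : ℤ} (hab : IsCoprime a b) (ha : 0 < a)
    (h : a * b = c ^ 2) : ∃ u, a = u ^ 2 := by
  obtain ⟨u, hu | hu⟩ := sq_of_isCoprime hab h
  · exact ⟨u, hu⟩
  · nlinarith [sq_nonneg u]

lemma exists_eq_mul_sq_of_dvd_of_isCoprime {p a b c : ℤ} (hp : 0 < p) (hpa : p ∣ a)
    (hab : IsCoprime a b) (ha : 0 < a) (hb : 0 < b) (h : a * b = p * c ^ 2) :
    ∃ u v, a = p * v ^ 2 ∧ b = u ^ 2 := by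
  obtain ⟨t, rfl⟩ := hpa
  have ht : 0 < t := pos_of_mul_pos_right ha hp.le
  have htb : t * b = c ^ 2 := mul_left_cancel₀ hp.ne' (by rw [← h]; ring)
  have hcop : IsCoprime t b := hab.of_isCoprime_of_dvd_left (dvd_mul_left t p)
  obtain ⟨v, rfl⟩ := exists_sq_of_isCoprime_of_pos hcop ht htb
  obtain ⟨u, rfl⟩ := exists_sq_of_isCoprime_of_pos hcop.symm hb (by rw [mul_comm, htb])
  exact ⟨u, v, rfl, rfl⟩

lemma exists_sq_of_isCoprime_of_mul_eq_prime_mul_sq {p a b c : ℤ} (hp : Prime p) (hp0 : 0 < p)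
    (hab : IsCoprime a b) (ha : 0 < a) (hb : 0 < b) (h : a * b = p * c ^ 2) :
    (∃ u v, a = p * v ^ 2 ∧ b = u ^ 2) ∨ ∃ u v, a = u ^ 2 ∧ b = p * v ^ 2 := by
  rcases hp.dvd_mul.mp ⟨c ^ 2, h⟩ with hpa | hpb
  · exact .inl (exists_eq_mul_sq_of_dvd_of_isCoprime hp0 hpa hab ha hb h)
  · obtain ⟨u, v, hb', ha'⟩ :=
      exists_eq_mul_sq_of_dvd_of_isCoprime hp0 hpb hab.symm hb ha (by rw [mul_comm, h])
    exact .inr ⟨u, v, ha', hb'⟩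

end Int

lemma sq_add_ne_mul_sq_of_emod_eight_eq_seven {p d : ℤ} (hp : p % 8 = 7) (hd : d = 1 ∨ d = 2)
    (u v : ℤ) : u ^ 2 + d ≠ p * v ^ 2 := by
  have mod_eight : ∀ x y : ZMod 8, x ^ 2 + 1 ≠ 7 * y ^ 2 ∧ x ^ 2 + 2 ≠ 7 * y ^ 2 := by
    decide
  have hp' : (p : ZMod 8) = 7 := by
    rw [← ZMod.intCast_mod p 8, Nat.cast_ofNat, hp]; rfl
  intro h
  have h8 := congrArg (Int.cast : ℤ → ZMod 8) h
  push_cast [hp'] at h8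
  rcases hd with rfl | rfl
  · exact (mod_eight u v).1 (by exact_mod_cast h8)
  · exact (mod_eight u v).2 (by exact_mod_cast h8)

lemma exists_sq_and_mul_sq_of_mul_add_eq_mul_sq {p a c d : ℤ} (hp : Prime p) (hp0 : 0 < p)
    (hp8 : p % 8 = 7) (hd : d = 1 ∨ d = 2) (ha : 0 < a) (hcop : IsCoprime a (a + d))
    (h : a * (a + d) = p * c ^ 2) : ∃ u v, a + d = u ^ 2 ∧ a = p * v ^ 2 := by
  have had : 0 < a + d := by omega
  rcases Int.exists_sq_of_isCoprime_of_mul_eq_prime_mul_sq hp hp0 hcop ha had h with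
    ⟨u, v, ha', hb'⟩ | ⟨u, v, ha', hb'⟩
  · exact ⟨u, v, hb', ha'⟩
  · exact absurd (by rw [← ha', hb']) (sq_add_ne_mul_sq_of_emod_eight_eq_seven hp8 hd u v)

namespace Pell

lemma Solution₁.exists_sq_sub_mul_sq_eq_two_of_even_x {p : ℤ} (hp : Prime p) (hp8 : p % 8 = 7)
    {s : Solution₁ p} (hx : 1 < s.x) (heven : Even s.x) :
    ∃ x y : ℤ, x ^ 2 - p * y ^ 2 = 2 := by
  obtain ⟨m, hm⟩ := heven
  have hcop : IsCoprime (s.x - 1) (s.x - 1 + 2) := ⟨m, 1 - m, by rw [hm]; ring⟩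
  obtain ⟨u, v, hu, hv⟩ := exists_sq_and_mul_sq_of_mul_add_eq_mul_sq hp
    (Solution₁.d_pos_of_one_lt_x hx) hp8 (.inr rfl) (by omega) hcop
    (by rw [s.prop_y]; ring)
  exact ⟨u, v, by linear_combination hv - hu⟩

lemma IsFundamental.even_x_s2 {p : ℤ} (hp : Prime p) (hp8 : p % 8 = 7) {s : Solution₁ p}
    (hs : IsFundamental s) : Even s.x := by
  by_contra hodd
  obtain ⟨k, hk⟩ := Int.not_even_iff_odd.mp hodd
  have hk0 : 0 < k := by have := hs.1; omega
  have hpy : p * s.y ^ 2 = 2 * (2 * (k * (k + 1))) := by rw [s.prop_y, hk]; ring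
  obtain ⟨c, hc⟩ : Even s.y := by
    have hp_odd : ¬Even p := by rw [Int.even_iff]; omega
    have := (Int.even_mul.mp ⟨_, hpy.trans (two_mul _)⟩).resolve_left hp_odd
    exact (Int.even_pow.mp this).1
  obtain ⟨u, v, hu, hv⟩ := exists_sq_and_mul_sq_of_mul_add_eq_mul_sq hp hs.d_pos hp8 (.inl rfl)
    hk0 ⟨-1, 1, by ring⟩ (c := c) (by rw [hc] at hpy; linarith)
  have hsol : |u| ^ 2 - p * v ^ 2 = 1 := by rw [sq_abs]; linarith
  have hu1 : 1 < |u| := by nlinarith [abs_nonneg u]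
  have hlt : |u| < s.x := by nlinarith [sq_abs u]
  exact hlt.not_ge (hs.x_le_x (a := Solution₁.mk |u| v hsol) hu1)

end Pell

theorem pell_two_solvable (p : ℕ) (hp : p.Prime) (h : p % 8 = 7) :
    ∃ x y : ℤ, x ^ 2 - (p : ℤ) * y ^ 2 = 2 := by
  have hp' : Prime (p : ℤ) := Nat.prime_iff_prime_int.mp hp
  have h' : (p : ℤ) % 8 = 7 := by omega
  obtain ⟨s, hs⟩ := Pell.IsFundamental.exists_of_not_isSquare (mod_cast hp.pos) hp'.not_isSquare
  exact s.exists_sq_sub_mul_sq_eq_two_of_even_x hp' h' hs.1 (hs.even_x_s2 hp' h')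
end

section
/- For any odd prime p, exactly one of the three diophantine equations x² - p·y² = -1, x² - p·y² = 2, x² - p·y² = -2 has an integer solution. -/
/-!
Let `(X, Y)` be the fundamental solution of `X² - p Y² = 1`. If `X` is even, `X - 1` and `X + 1`
are coprime with product `p Y²`, so one of them is a square and the other `p` times a square;
their difference `2` then yields a solution of `x² - p y² = 2` or of `x² - p y² = -2`.
If `X = 2m + 1` is odd, then `Y = 2c` and `m (m + 1) = p c²`. The splitting `m = p s²`,
`m + 1 = t²` would give the solution `(t, s)`, smaller than `(X, Y)`, so `m = s²`,
`m + 1 = p t²` and `s² - p t² = -1`.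

At most one equation is solvable because reduction mod `8` shows that they force
`p ≡ 1 (mod 4)`, `p ≡ 7 (mod 8)` and `p ≡ 3 (mod 8)` respectively.
-/

namespace Int

theorem exists_sq_of_isCoprime_of_mul_eq_sq {a b c : ℤ} (hab : IsCoprime a b) (ha : 0 ≤ a)
    (h : a * b = c ^ 2) : ∃ s, a = s ^ 2 := by
  obtain ⟨s, hs | hs⟩ := Int.sq_of_isCoprime hab h
  · exact ⟨s, hs⟩
  · exact ⟨s, by nlinarith [sq_nonneg s]⟩

theorem exists_eq_mul_sq_and_eq_sq_of_dvd {p : ℕ} (hp : p.Prime) {a b c : ℤ}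
    (hab : IsCoprime a b) (ha : 0 ≤ a) (hb : 0 ≤ b) (h : a * b = p * c ^ 2)
    (hpa : (p : ℤ) ∣ a) :
    ∃ s t, a = p * s ^ 2 ∧ b = t ^ 2 := by
  obtain ⟨k, rfl⟩ := hpa
  have hp0 : (0 : ℤ) < p := by exact_mod_cast hp.pos
  have hkb : k * b = c ^ 2 := mul_left_cancel₀ hp0.ne' (by rw [← h, mul_assoc])
  have hk : 0 ≤ k := (mul_nonneg_iff_of_pos_left hp0).mp ha
  have hkb' : IsCoprime k b := hab.of_mul_left_right
  obtain ⟨s, rfl⟩ := exists_sq_of_isCoprime_of_mul_eq_sq hkb' hk hkb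
  obtain ⟨t, rfl⟩ := exists_sq_of_isCoprime_of_mul_eq_sq hkb'.symm hb (by rw [mul_comm, hkb])
  exact ⟨s, t, rfl, rfl⟩

theorem exists_eq_mul_sq_and_eq_sq_or_eq_sq_and_eq_mul_sq {p : ℕ} (hp : p.Prime) {a b c : ℤ}
    (hab : IsCoprime a b) (ha : 0 ≤ a) (hb : 0 ≤ b) (h : a * b = p * c ^ 2) :
    (∃ s t, a = p * s ^ 2 ∧ b = t ^ 2) ∨ (∃ s t, a = s ^ 2 ∧ b = p * t ^ 2) := by
  rcases Int.Prime.dvd_mul' hp ⟨c ^ 2, h⟩ with hpa | hpb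
  · exact Or.inl (exists_eq_mul_sq_and_eq_sq_of_dvd hp hab ha hb h hpa)
  · obtain ⟨t, s, hb, ha⟩ :=
      exists_eq_mul_sq_and_eq_sq_of_dvd hp hab.symm hb ha (by rw [mul_comm, h]) hpb
    exact Or.inr ⟨s, t, ha, hb⟩

theorem modEq_one_of_sq_sub_mul_sq_eq_neg_one {d x y : ℤ} (hd : Odd d)
    (h : x ^ 2 - d * y ^ 2 = -1) : d ≡ 1 [ZMOD 4] := by
  obtain ⟨k, rfl⟩ := hd
  have key : ∀ k x y : ZMod 4, x ^ 2 - (2 * k + 1) * y ^ 2 = -1 → 2 * k + 1 = 1 := by decide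
  refine (ZMod.intCast_eq_intCast_iff _ _ 4).mp ?_
  exact_mod_cast key k x y (by exact_mod_cast congrArg (Int.cast : ℤ → ZMod 4) h)

theorem modEq_seven_of_sq_sub_mul_sq_eq_two {d x y : ℤ} (hd : Odd d)
    (h : x ^ 2 - d * y ^ 2 = 2) : d ≡ 7 [ZMOD 8] := by
  obtain ⟨k, rfl⟩ := hd
  have key : ∀ k x y : ZMod 8, x ^ 2 - (2 * k + 1) * y ^ 2 = 2 → 2 * k + 1 = 7 := by decide
  refine (ZMod.intCast_eq_intCast_iff _ _ 8).mp ?_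
  exact_mod_cast key k x y (by exact_mod_cast congrArg (Int.cast : ℤ → ZMod 8) h)

theorem modEq_three_of_sq_sub_mul_sq_eq_neg_two {d x y : ℤ} (hd : Odd d)
    (h : x ^ 2 - d * y ^ 2 = -2) : d ≡ 3 [ZMOD 8] := by
  obtain ⟨k, rfl⟩ := hd
  have key : ∀ k x y : ZMod 8, x ^ 2 - (2 * k + 1) * y ^ 2 = -2 → 2 * k + 1 = 3 := by decide
  refine (ZMod.intCast_eq_intCast_iff _ _ 8).mp ?_
  exact_mod_cast key k x y (by exact_mod_cast congrArg (Int.cast : ℤ → ZMod 8) h)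

end Int

namespace Pell

theorem exists_sq_sub_mul_sq_eq_two_or_neg_two_of_even {p : ℕ} (hp : p.Prime) {X Y : ℤ}
    (h : X ^ 2 - p * Y ^ 2 = 1) (hX : 0 < X) (hXeven : Even X) :
    (∃ x y : ℤ, x ^ 2 - p * y ^ 2 = 2) ∨ (∃ x y : ℤ, x ^ 2 - p * y ^ 2 = -2) := by
  obtain ⟨m, rfl⟩ := hXeven
  have hco : IsCoprime (m + m - 1) (m + m + 1) := ⟨m, 1 - m, by ring⟩
  rcases Int.exists_eq_mul_sq_and_eq_sq_or_eq_sq_and_eq_mul_sq hp hco (by omega) (by omega)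
      (c := Y) (by linear_combination h) with ⟨s, t, hs, ht⟩ | ⟨s, t, hs, ht⟩
  · exact Or.inl ⟨t, s, by linear_combination hs - ht⟩
  · exact Or.inr ⟨s, t, by linear_combination ht - hs⟩

theorem exists_sq_sub_mul_sq_eq_neg_one_of_odd {p : ℕ} (hp : p.Prime) (hodd : p ≠ 2)
    {a : Solution₁ p} (ha : IsFundamental a) (hXodd : Odd a.x) :
    ∃ x y : ℤ, x ^ 2 - p * y ^ 2 = -1 := by
  obtain ⟨m, hm⟩ := hXodd
  have hprop := a.prop
  rw [hm] at hprop
  have hYeven : Even a.y := by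
    have hpY : Even ((p : ℤ) * a.y ^ 2) := ⟨2 * m * m + 2 * m, by linear_combination -hprop⟩
    have hpOdd : ¬ Even (p : ℤ) := by
      rw [Int.not_even_iff_odd]; exact_mod_cast hp.odd_of_ne_two hodd
    exact (Int.even_pow.mp ((Int.even_mul.mp hpY).resolve_left hpOdd)).1
  obtain ⟨c, hc⟩ := hYeven
  rw [hc] at hprop
  have hm0 : 0 < m := by linarith [ha.1]
  have hmc : m * (m + 1) = p * c ^ 2 :=
    mul_left_cancel₀ four_ne_zero (by linear_combination hprop)
  have hco : IsCoprime m (m + 1) := ⟨-1, 1, by ring⟩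
  rcases Int.exists_eq_mul_sq_and_eq_sq_or_eq_sq_and_eq_mul_sq hp hco hm0.le (by omega) hmc with
    ⟨s, t, hs, ht⟩ | ⟨s, t, hs, ht⟩
  · -- `(|t|, s)` would be a solution with `1 < |t| < a.x`.
    exfalso
    have hb : |t| ^ 2 - p * s ^ 2 = 1 := by rw [sq_abs]; linear_combination hs - ht
    have hlt : 1 < |t| := by nlinarith [abs_nonneg t, sq_abs t]
    have hle := ha.x_le_x (a := Solution₁.mk |t| s hb) (by rwa [Solution₁.x_mk])
    rw [Solution₁.x_mk, hm] at hle
    nlinarith [sq_abs t]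
  · exact ⟨s, t, by linear_combination ht - hs⟩

theorem exists_sq_sub_mul_sq_eq_neg_one_or_two_or_neg_two {p : ℕ} (hp : p.Prime)
    (hodd : p ≠ 2) :
    (∃ x y : ℤ, x ^ 2 - p * y ^ 2 = -1) ∨ (∃ x y : ℤ, x ^ 2 - p * y ^ 2 = 2) ∨
      (∃ x y : ℤ, x ^ 2 - p * y ^ 2 = -2) := by
  obtain ⟨a, ha⟩ := IsFundamental.exists_of_not_isSquare (by exact_mod_cast hp.pos)
    (Nat.prime_iff_prime_int.mp hp).not_isSquare
  rcases Int.even_or_odd a.x with hX | hX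
  · exact Or.inr (exists_sq_sub_mul_sq_eq_two_or_neg_two_of_even hp a.prop ha.x_pos hX)
  · exact Or.inl (exists_sq_sub_mul_sq_eq_neg_one_of_odd hp hodd ha hX)

end Pell

theorem exactly_one_pell_solvable (p : ℕ) (hp : p.Prime) (hodd : p ≠ 2) :
    ((∃ x y : ℤ, x ^ 2 - (p : ℤ) * y ^ 2 = -1) ∧
      ¬ (∃ x y : ℤ, x ^ 2 - (p : ℤ) * y ^ 2 = 2) ∧
      ¬ (∃ x y : ℤ, x ^ 2 - (p : ℤ) * y ^ 2 = -2)) ∨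
    (¬ (∃ x y : ℤ, x ^ 2 - (p : ℤ) * y ^ 2 = -1) ∧
      (∃ x y : ℤ, x ^ 2 - (p : ℤ) * y ^ 2 = 2) ∧
      ¬ (∃ x y : ℤ, x ^ 2 - (p : ℤ) * y ^ 2 = -2)) ∨
    (¬ (∃ x y : ℤ, x ^ 2 - (p : ℤ) * y ^ 2 = -1) ∧
      ¬ (∃ x y : ℤ, x ^ 2 - (p : ℤ) * y ^ 2 = 2) ∧
      (∃ x y : ℤ, x ^ 2 - (p : ℤ) * y ^ 2 = -2)) := by
  have hpodd : Odd (p : ℤ) := by exact_mod_cast hp.odd_of_ne_two hodd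
  have h₁₂ : ¬ ((∃ x y : ℤ, x ^ 2 - (p : ℤ) * y ^ 2 = -1) ∧
      ∃ x y : ℤ, x ^ 2 - (p : ℤ) * y ^ 2 = 2) := by
    rintro ⟨⟨x, y, h⟩, u, v, h'⟩
    have h4 := Int.modEq_one_of_sq_sub_mul_sq_eq_neg_one hpodd h
    have h8 := Int.modEq_seven_of_sq_sub_mul_sq_eq_two hpodd h'
    unfold Int.ModEq at h4 h8; omega
  have h₁₃ : ¬ ((∃ x y : ℤ, x ^ 2 - (p : ℤ) * y ^ 2 = -1) ∧
      ∃ x y : ℤ, x ^ 2 - (p : ℤ) * y ^ 2 = -2) := by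
    rintro ⟨⟨x, y, h⟩, u, v, h'⟩
    have h4 := Int.modEq_one_of_sq_sub_mul_sq_eq_neg_one hpodd h
    have h8 := Int.modEq_three_of_sq_sub_mul_sq_eq_neg_two hpodd h'
    unfold Int.ModEq at h4 h8; omega
  have h₂₃ : ¬ ((∃ x y : ℤ, x ^ 2 - (p : ℤ) * y ^ 2 = 2) ∧
      ∃ x y : ℤ, x ^ 2 - (p : ℤ) * y ^ 2 = -2) := by
    rintro ⟨⟨x, y, h⟩, u, v, h'⟩
    have h8 := Int.modEq_seven_of_sq_sub_mul_sq_eq_two hpodd h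
    have h8' := Int.modEq_three_of_sq_sub_mul_sq_eq_neg_two hpodd h'
    unfold Int.ModEq at h8 h8'; omega
  rcases Pell.exists_sq_sub_mul_sq_eq_neg_one_or_two_or_neg_two hp hodd with h | h | h
  · exact Or.inl ⟨h, fun h' => h₁₂ ⟨h, h'⟩, fun h' => h₁₃ ⟨h, h'⟩⟩
  · exact Or.inr (Or.inl ⟨fun h' => h₁₂ ⟨h', h⟩, h, fun h' => h₂₃ ⟨h, h'⟩⟩)
  · exact Or.inr (Or.inr ⟨fun h' => h₁₃ ⟨h', h⟩, fun h' => h₂₃ ⟨h', h⟩, h⟩)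
end

section
/- If p is a prime with p ≡ 3 (mod 4), then the period length of the continued fraction expansion of √p is even. -/
/-- The value of a finite continued fraction [x₀; x₁, ..., xₙ]. -/
noncomputable def cfFinite : List ℝ → ℝ
  | [] => 0
  | [x] => x
  | x :: y :: xs => x + (cfFinite (y :: xs))⁻¹

/-- The eventually periodic sequence with initial term `a₀` and repeating block `L`. -/
def periodicSeq (a₀ : ℕ) (L : List ℕ) : ℕ → ℕ
  | 0 => a₀
  | n + 1 => L.getD (n % L.length) 0

/-- `x` is the value of the infinite continued fraction with partial quotients `a`,
i.e. the limit of the finite convergents. -/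
def cfValue (a : ℕ → ℕ) (x : ℝ) : Prop :=
  Filter.Tendsto
    (fun n => cfFinite (((List.range (n + 1)).map a).map (fun k : ℕ => (k : ℝ))))
    Filter.atTop (nhds x)

/-- `x` is the value of the infinite periodic continued fraction
`[a₀; L repeated]`. -/
def IsPeriodicCF (a₀ : ℕ) (L : List ℕ) (x : ℝ) : Prop :=
  cfValue (periodicSeq a₀ L) x

/-- `P` is the minimal period length of the continued fraction expansion of `√D`. -/
def IsMinPeriodCF (D P : ℕ) : Prop :=
  0 < P ∧
  (∃ L : List ℕ, L.length = P ∧ IsPeriodicCF (Nat.sqrt D) L (Real.sqrt D)) ∧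
  ∀ Q : ℕ, 0 < Q → Q < P →
    ¬ ∃ L : List ℕ, L.length = Q ∧ IsPeriodicCF (Nat.sqrt D) L (Real.sqrt D)

/-! If `√p = [a; L, L, …]` with a block `L` of odd length, then `t = 1/(√p - a) = [L; L, …]`
is a fixed point of the Möbius map of `L`, whose integer matrix has determinant
`(-1)^|L| = -1`. As `t ∈ ℚ(√p)` is irrational, comparing rational and irrational parts of the
fixed-point equation forces the matrix into the shape `!![A, B; B * (p - a²), A - 2aB]`, with
determinant `(A - aB)² - pB²`. Hence `-1` is a square mod `p`, impossible for `p ≡ 3 mod 4`. -/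

open Filter Topology

noncomputable def cfWithTail : List ℝ → ℝ → ℝ
  | [], v => v
  | x :: xs, v => x + (cfWithTail xs v)⁻¹

lemma cfFinite_cons (x : ℝ) {l : List ℝ} (hl : l ≠ []) :
    cfFinite (x :: l) = x + (cfFinite l)⁻¹ := by
  cases l with
  | nil => contradiction
  | cons y ys => rfl

lemma cfFinite_append (l : List ℝ) {l' : List ℝ} (hl' : l' ≠ []) :
    cfFinite (l ++ l') = cfWithTail l (cfFinite l') := by
  induction l with
  | nil => rfl
  | cons x xs ih =>
    rw [List.cons_append, cfFinite_cons _ (by simp [hl']), ih]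
    rfl

lemma Irrational.cfWithTail {v : ℝ} (hv : Irrational v) (l : List ℕ) :
    Irrational (cfWithTail (l.map (↑)) v) := by
  induction l with
  | nil => exact hv
  | cons x xs ih => exact ih.inv.natCast_add x

lemma continuousAt_cfWithTail {v : ℝ} (hv : Irrational v) (l : List ℕ) :
    ContinuousAt (cfWithTail (l.map (↑))) v := by
  induction l with
  | nil => exact continuousAt_id
  | cons x xs ih => exact continuousAt_const.add (ih.inv₀ (hv.cfWithTail xs).ne_zero)

lemma exists_cfWithTail_mul_eq {v : ℝ} (hv : Irrational v) (l : List ℕ) :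
    ∃ A B C D : ℤ, A * D - B * C = (-1) ^ l.length ∧
      cfWithTail (l.map (↑)) v * (C * v + D) = A * v + B := by
  induction l with
  | nil => exact ⟨1, 0, 0, 1, by norm_num, by simp [cfWithTail]⟩
  | cons x xs ih =>
    obtain ⟨A, B, C, D, hdet, hmob⟩ := ih
    have hw := (hv.cfWithTail xs).ne_zero
    refine ⟨x * A + C, x * B + D, A, B, by rw [List.length_cons, pow_succ, ← hdet]; ring, ?_⟩
    change (x + (cfWithTail (xs.map (↑)) v)⁻¹) * _ = _
    rw [← hmob]
    field_simp
    push_cast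
    linear_combination (x : ℝ) * hmob

lemma map_periodicSeq_range (a₀ : ℕ) (L : List ℕ) (m : ℕ) :
    (List.range (m * L.length + 1)).map (periodicSeq a₀ L) =
      a₀ :: (List.replicate m L).flatten := by
  rw [List.range_succ_eq_map, List.map_cons, List.map_map]
  congr 1
  induction m with
  | zero => simp
  | succ m ih =>
    rw [add_mul, one_mul, List.range_add, List.map_append, List.map_map, ih,
      List.replicate_succ', List.flatten_append, List.flatten_singleton]
    congr 1
    refine List.ext_getElem (by simp) fun n _ hn => ?_
    simp [periodicSeq, Nat.mul_add_mod_self_right, Nat.mod_eq_of_lt hn, hn]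

namespace IsPeriodicCF

variable {a₀ : ℕ} {L : List ℕ} {x : ℝ}

lemma tendsto_cfFinite_replicate (hx : IsPeriodicCF a₀ L x) (hL : L ≠ []) (hxa : x ≠ a₀) :
    Tendsto (fun k => cfFinite (((List.replicate (k + 1) L).flatten).map (↑)))
      atTop (𝓝 (x - a₀)⁻¹) := by
  have hmono : StrictMono fun k => (k + 1) * L.length := fun i j hij =>
    Nat.mul_lt_mul_of_pos_right (by omega) (List.length_pos_iff.mpr hL)
  have hconv := (hx.comp hmono.tendsto_atTop).sub_const (a₀ : ℝ)
  refine ((hconv.inv₀ (sub_ne_zero.mpr hxa)).congr fun k => ?_)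
  simp only [Function.comp_apply, map_periodicSeq_range, List.map_cons]
  rw [cfFinite_cons _ (by simp [List.replicate_succ, hL]), add_sub_cancel_left, inv_inv]

lemma cfWithTail_inv_sub_eq (hx : IsPeriodicCF a₀ L x) (hL : L ≠ []) (hirr : Irrational x) :
    cfWithTail (L.map (↑)) (x - a₀)⁻¹ = (x - a₀)⁻¹ := by
  have hlim := hx.tendsto_cfFinite_replicate hL (hirr.ne_nat a₀)
  have hstep : ∀ k, cfFinite (((List.replicate (k + 2) L).flatten).map (↑)) =
      cfWithTail (L.map (↑)) (cfFinite (((List.replicate (k + 1) L).flatten).map (↑))) := by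
    intro k
    rw [List.replicate_succ, List.flatten_cons, List.map_append, cfFinite_append]
    simp [List.replicate_succ, hL]
  have hcont := continuousAt_cfWithTail (hirr.sub_natCast a₀).inv L
  refine tendsto_nhds_unique ?_ (hlim.comp (tendsto_add_atTop_nat 1))
  exact (hcont.tendsto.comp hlim).congr fun k => (hstep k).symm

end IsPeriodicCF

lemma Irrational.eq_zero_of_intCast_add_intCast_mul_eq_zero {s : ℝ} (hs : Irrational s)
    {X Y : ℤ} (h : (X : ℝ) + Y * s = 0) : X = 0 ∧ Y = 0 := by
  obtain rfl : Y = 0 := by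
    by_contra hY
    exact ((hs.intCast_mul hY).intCast_add X).ne_zero h
  simpa using h

lemma sq_sub_mul_sq_eq_det_of_fixed {s : ℝ} (hs : Irrational s) {d a A B C D : ℤ}
    (hsd : s ^ 2 = d)
    (hfix : (s - a)⁻¹ * (C * (s - a)⁻¹ + D) = A * (s - a)⁻¹ + B) :
    (A - a * B) ^ 2 - d * B ^ 2 = A * D - B * C := by
  have hu : s - a ≠ 0 := sub_ne_zero.mpr (hs.ne_int a)
  have hquad :
      ((C - (D - A) * a - B * (d + a ^ 2) : ℤ) : ℝ) + (D - A + 2 * a * B : ℤ) * s = 0 := by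
    field_simp at hfix
    push_cast
    linear_combination hfix + B * hsd
  obtain ⟨hX, hY⟩ := hs.eq_zero_of_intCast_add_intCast_mul_eq_zero hquad
  linear_combination (a * B - A) * hY + B * hX

lemma sq_sub_mul_sq_ne_neg_one_s6 {p : ℕ} [Fact p.Prime] (hp : p % 4 = 3) (X Y : ℤ) :
    X ^ 2 - p * Y ^ 2 ≠ -1 := by
  intro h
  apply ZMod.mod_four_ne_three_of_sq_eq_neg_one (y := (X : ZMod p)) _ hp
  simpa using congrArg (Int.cast : ℤ → ZMod p) h

theorem period_even_of_three_mod_four (p : ℕ) (hp : p.Prime) (h : p % 4 = 3)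
    (P : ℕ) (hP : IsMinPeriodCF p P) : Even P := by
  obtain ⟨hPpos, ⟨L, rfl, hcf⟩, -⟩ := hP
  have : Fact p.Prime := ⟨hp⟩
  have hsqrt := hp.irrational_sqrt
  have hfix := hcf.cfWithTail_inv_sub_eq (List.length_pos_iff.mp hPpos) hsqrt
  obtain ⟨A, B, C, D, hdet, hmob⟩ :=
    exists_cfWithTail_mul_eq (hsqrt.sub_natCast (Nat.sqrt p)).inv L
  rw [hfix] at hmob
  have hnorm := sq_sub_mul_sq_eq_det_of_fixed hsqrt (d := p) (a := Nat.sqrt p)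
    (by simp) (by exact_mod_cast hmob)
  rw [hdet] at hnorm
  by_contra hodd
  rw [Nat.not_even_iff_odd.mp hodd |>.neg_one_pow] at hnorm
  exact sq_sub_mul_sq_ne_neg_one_s6 h _ _ hnorm
end

section
/- For every integer x₀ ≥ 2, the continued fraction [x₀; 1, x₀-1, 1, 2x₀ repeated] equals √((x₀+1)² - 2). -/
/-!
Put `X = x₀` and `v = √(X² + 2X - 1)`, so that `X < v < X + 1`. Using `v² = X² + 2X - 1` to
rationalise each step, the complete quotients of `v` after the first are
`(v + X)/(2X - 1)`, `(v + X - 1)/2`, `(v + X - 1)/(2X - 1)`, `v + X`, with integer parts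
`1, X - 1, 1, 2X`; the fractional part of `v + X` is `v - X`, the same as that of `v`, so the cycle
repeats. The convergents of Mathlib's `GenContFract.of v` are the finite continued fractions of
these integer parts, and they converge to `v`.
-/

noncomputable def completeQuotient (v : ℝ) : ℕ → ℝ
  | 0 => v
  | k + 1 => (Int.fract (completeQuotient v k))⁻¹

theorem completeQuotient_fract_inv (v : ℝ) (k : ℕ) :
    completeQuotient (Int.fract v)⁻¹ k = completeQuotient v (k + 1) := by
  induction k with
  | zero => rfl
  | succ k ih => exact congrArg (fun x => (Int.fract x)⁻¹) ih

theorem completeQuotient_succ_eq_of_mul_eq_one {v x y : ℝ} {k : ℕ} {b : ℤ}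
    (hk : completeQuotient v k = x) (hb : ⌊x⌋ = b) (hy : (x - b) * y = 1) :
    completeQuotient v (k + 1) = y := by
  rw [completeQuotient, Int.fract, hk, hb]
  exact inv_eq_of_mul_eq_one_right hy

theorem completeQuotient_add_period {v : ℝ} {m p : ℕ}
    (h : completeQuotient v (m + p) = completeQuotient v m) (k : ℕ) :
    completeQuotient v (m + p + k) = completeQuotient v (m + k) := by
  induction k with
  | zero => exact h
  | succ k ih => exact congrArg (fun x => (Int.fract x)⁻¹) ih

theorem completeQuotient_add_mul_period {v : ℝ} {m p : ℕ}
    (h : completeQuotient v (m + p) = completeQuotient v m) (q k : ℕ) :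
    completeQuotient v (m + p * q + k) = completeQuotient v (m + k) := by
  induction q with
  | zero => simp
  | succ q ih =>
    rw [mul_add_one, add_comm (p * q), ← add_assoc, add_assoc _ (p * q),
      completeQuotient_add_period h, ← add_assoc, ih]

theorem cfFinite_cons_of_ne_nil (x : ℝ) {xs : List ℝ} (hxs : xs ≠ []) :
    cfFinite (x :: xs) = x + (cfFinite xs)⁻¹ := by
  obtain ⟨y, ys, rfl⟩ := List.exists_cons_of_ne_nil hxs
  rfl

theorem convs_eq_cfFinite (v : ℝ) (n : ℕ) :
    (GenContFract.of v).convs n =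
      cfFinite ((List.range (n + 1)).map fun k => (⌊completeQuotient v k⌋ : ℝ)) := by
  induction n generalizing v with
  | zero =>
    simp [GenContFract.zeroth_conv_eq_h, GenContFract.of_h_eq_floor, cfFinite, completeQuotient]
  | succ n ih =>
    rw [GenContFract.convs_succ, ih, one_div, List.range_succ_eq_map (n := n + 1),
      List.map_cons, List.map_map, cfFinite_cons_of_ne_nil _ (by simp)]
    simp only [Function.comp_def, completeQuotient_fract_inv]
    rfl

theorem cfValue_of_floor_completeQuotient {a : ℕ → ℕ} {v : ℝ}
    (h : ∀ k, ⌊completeQuotient v k⌋ = a k) : cfValue a v := by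
  refine (GenContFract.of_convergence v).congr fun n => ?_
  simp only [convs_eq_cfFinite, h, Int.cast_natCast, List.map_map, Function.comp_def]

theorem isPeriodicCF_of_completeQuotient {v : ℝ} {a₀ : ℕ} {L : List ℕ} (hL : L ≠ [])
    (h₀ : ⌊v⌋ = a₀) (hfloor : ∀ j (hj : j < L.length), ⌊completeQuotient v (j + 1)⌋ = L[j])
    (hper : completeQuotient v (1 + L.length) = completeQuotient v 1) :
    IsPeriodicCF a₀ L v := by
  have hp : 0 < L.length := List.length_pos_of_ne_nil hL
  refine cfValue_of_floor_completeQuotient fun k => ?_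
  cases k with
  | zero => exact h₀
  | succ n =>
    have hcq : completeQuotient v (n + 1) = completeQuotient v (n % L.length + 1) := by
      have := completeQuotient_add_mul_period hper (n / L.length) (n % L.length)
      rwa [add_assoc, Nat.div_add_mod, add_comm 1, add_comm 1] at this
    rw [hcq, hfloor _ (Nat.mod_lt _ hp), periodicSeq, List.getD_eq_getElem _ _ (Nat.mod_lt _ hp)]

theorem isPeriodicCF_of_sq_eq {x₀ : ℕ} (hx : 2 ≤ x₀) {v : ℝ} (hv0 : 0 ≤ v)
    (hv : v ^ 2 = x₀ ^ 2 + 2 * x₀ - 1) : IsPeriodicCF x₀ [1, x₀ - 1, 1, 2 * x₀] v := by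
  set X : ℝ := (x₀ : ℝ)
  have hX : (2 : ℝ) ≤ X := Nat.ofNat_le_cast.2 hx
  have hlo : X < v := by nlinarith
  have hhi : v < X + 1 := by nlinarith
  have hpred : (((x₀ - 1 : ℕ) : ℤ) : ℝ) = X - 1 := by
    push_cast [Nat.cast_sub (by omega : 1 ≤ x₀)]; rfl
  have hden : 0 < 2 * X - 1 := by linarith
  have f0 : ⌊v⌋ = x₀ := Int.floor_eq_iff.2 ⟨by push_cast; linarith, by push_cast; linarith⟩
  have f1 : ⌊(v + X) / (2 * X - 1)⌋ = (1 : ℕ) := by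
    rw [Int.floor_eq_iff, le_div_iff₀ hden, div_lt_iff₀ hden]; push_cast; constructor <;> linarith
  have f2 : ⌊(v + X - 1) / 2⌋ = (x₀ - 1 : ℕ) := by
    rw [Int.floor_eq_iff, hpred]; constructor <;> linarith
  have f3 : ⌊(v + X - 1) / (2 * X - 1)⌋ = (1 : ℕ) := by
    rw [Int.floor_eq_iff, le_div_iff₀ hden, div_lt_iff₀ hden]; push_cast; constructor <;> linarith
  have f4 : ⌊v + X⌋ = (2 * x₀ : ℕ) := by
    rw [Int.floor_eq_iff]; push_cast; constructor <;> linarith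
  have q1 : completeQuotient v 1 = (v + X) / (2 * X - 1) :=
    completeQuotient_succ_eq_of_mul_eq_one (x := v) rfl f0
      (by field_simp (disch := linarith); linear_combination hv)
  have q2 : completeQuotient v 2 = (v + X - 1) / 2 :=
    completeQuotient_succ_eq_of_mul_eq_one q1 f1
      (by push_cast; field_simp (disch := linarith); linear_combination hv)
  have q3 : completeQuotient v 3 = (v + X - 1) / (2 * X - 1) :=
    completeQuotient_succ_eq_of_mul_eq_one q2 f2
      (by rw [hpred]; field_simp (disch := linarith); linear_combination hv)
  have q4 : completeQuotient v 4 = v + X :=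
    completeQuotient_succ_eq_of_mul_eq_one q3 f3
      (by push_cast; field_simp (disch := linarith); linear_combination hv)
  have q5 : completeQuotient v 5 = completeQuotient v 1 :=
    q1 ▸ completeQuotient_succ_eq_of_mul_eq_one q4 f4
      (by push_cast; field_simp (disch := linarith); linear_combination hv)
  refine isPeriodicCF_of_completeQuotient (by simp) f0 (fun j hj => ?_) q5
  simp only [List.length_cons, List.length_nil] at hj
  interval_cases j
  exacts [q1 ▸ f1, q2 ▸ f2, q3 ▸ f3, q4 ▸ f4]

theorem cf_value_sqrt (x₀ : ℕ) (h : 2 ≤ x₀) :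
    IsPeriodicCF x₀ [1, x₀ - 1, 1, 2 * x₀]
      (Real.sqrt (((x₀ + 1) ^ 2 - 2 : ℕ))) := by
  refine isPeriodicCF_of_sq_eq h (Real.sqrt_nonneg _) ?_
  rw [Real.sq_sqrt (Nat.cast_nonneg _), Nat.cast_sub (by nlinarith)]
  push_cast
  ring
end
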